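/- In the stage game get-close-to-the-target with target k, let S ⊆ {1,…,n} be a nonempty finite set with k ∈ S. Then the mixed strategy for player 1 that randomizes uniformly over S guarantees, against every opponent action a₂, an expected utility of at least −(1 − 1/|S|); i.e., it is a (1 − 1/|S|)-approximate maximin strategy for the game of value 0. -/

import Mathlib

/-- Possible outcomes of a round of a zero-sum stage game. -/
inductive Outcome
  | P1Wins
  | P2Wins
  | Draw
deriving DecidableEq

/-- The outcome of a round of *get-close-to-the-target* with actions `a₁` (player 1),
`a₂` (player 2) and hidden target `k`: if `|aᵢ - k| < |a₋ᵢ - k|` then player `i` wins;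
if `a₁ = a₂ = a ≠ k` then player 1 wins if `a < k` and player 2 wins if `a > k`;
otherwise the round is a draw. -/
def outcome (a₁ a₂ k : ℤ) : Outcome :=
  if |a₁ - k| < |a₂ - k| then .P1Wins
  else if |a₂ - k| < |a₁ - k| then .P2Wins
  else if a₁ = a₂ ∧ a₁ ≠ k then (if a₁ < k then .P1Wins else .P2Wins)
  else .Draw

/-- Player 1's utility in a round: `1` for a win, `-1` for a loss, `0` for a draw. -/
def u1 : Outcome → ℤ
  | .P1Wins => 1
  | .P2Wins => -1
  | .Draw => 0

/-! Playing the target itself never loses, and every other action loses at most `1`; hence the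
uniform average over `S ∋ k` loses at most `(|S| - 1) / |S|`. -/

lemma neg_one_le_u1 (o : Outcome) : -1 ≤ u1 o := by
  cases o <;> decide

lemma u1_outcome_target_nonneg (a₂ k : ℤ) : 0 ≤ u1 (outcome k a₂ k) := by
  unfold outcome
  split_ifs <;> simp_all [u1]

lemma one_sub_card_le_sum {ι : Type*} {S : Finset ι} {f : ι → ℝ} {i : ι} (hi : i ∈ S)
    (hfi : 0 ≤ f i) (hf : ∀ j ∈ S, -1 ≤ f j) :
    1 - (S.card : ℝ) ≤ ∑ j ∈ S, f j := by
  have hshift : f i + 1 ≤ ∑ j ∈ S, (f j + 1) :=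
    Finset.single_le_sum (f := fun j => f j + 1) (fun j hj => by linarith [hf j hj]) hi
  rw [Finset.sum_add_distrib, Finset.sum_const, nsmul_one] at hshift
  linarith

lemma neg_one_sub_inv_card_le_sum_div_card {ι : Type*} {S : Finset ι} {f : ι → ℝ} {i : ι}
    (hi : i ∈ S) (hfi : 0 ≤ f i) (hf : ∀ j ∈ S, -1 ≤ f j) :
    -(1 - 1 / (S.card : ℝ)) ≤ (∑ j ∈ S, f j) / (S.card : ℝ) := by
  have hcard : (0 : ℝ) < S.card := by exact_mod_cast Finset.card_pos.mpr ⟨i, hi⟩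
  calc -(1 - 1 / (S.card : ℝ)) = (1 - S.card) / S.card := by field_simp; ring
    _ ≤ (∑ j ∈ S, f j) / S.card := by gcongr; exact one_sub_card_le_sum hi hfi hf

theorem stmt7_general (n k : ℤ)
    (S : Finset ℤ) (hkS : k ∈ S) :
    ∀ a₂ ∈ Finset.Icc 1 n,
      -(1 - 1 / (S.card : ℝ)) ≤ (∑ a₁ ∈ S, (u1 (outcome a₁ a₂ k) : ℝ)) / (S.card : ℝ) := by
  intro a₂ _
  refine neg_one_sub_inv_card_le_sum_div_card hkS ?_ fun a₁ _ => ?_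
  · exact_mod_cast u1_outcome_target_nonneg a₂ k
  · exact_mod_cast neg_one_le_u1 _

/-- In the stage game get-close-to-the-target with target `k`, let `S ⊆ {1,…,n}` be a
nonempty finite set with `k ∈ S`. Then the mixed strategy for player 1 that randomizes
uniformly over `S` guarantees, against every opponent action `a₂`, an expected utility
of at least `−(1 − 1/|S|)`; i.e., it is a `(1 − 1/|S|)`-approximate maximin strategy for
the game of value `0`. -/
theorem stmt7 (n k : ℤ) (hn : 1 ≤ n) (hk : k ∈ Finset.Icc 1 n)
    (S : Finset ℤ) (hS : S ⊆ Finset.Icc 1 n) (hkS : k ∈ S) :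
    ∀ a₂ ∈ Finset.Icc 1 n,
      -(1 - 1 / (S.card : ℝ)) ≤ (∑ a₁ ∈ S, (u1 (outcome a₁ a₂ k) : ℝ)) / (S.card : ℝ) :=
  stmt7_general n k S hkS
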